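/- arXiv:2505.20754 — 5 statements merged into one kernel-verified Lean document; each statement's English description precedes it below -/
import Mathlib

section
/- Let μ be a probability measure on R^d with support X, and let k be a C₀-universal kernel. Suppose (μ_n) is a sequence of empirical measures μ_n = (1/n)∑_{i=1}^n δ_{x_i^{(n)}} with MMD(μ, μ_n) → 0. Then for every x ∈ X and every ε > 0, there exists N such that for all n > N, min_{1 ≤ i ≤ n} ‖x − x_i^{(n)}‖ ≤ ε; i.e., the supports of the μ_n become dense in X. -/
open MeasureTheory Filter
open scoped RealInnerProductSpace

/-- Let `μ` be a probability measure on `ℝ^d` with support `X`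
(characterised by: every ball around a point of `X` has positive measure), and let
the kernel (feature map `K`) be `C₀`-universal (every continuous function vanishing
at infinity can be uniformly approximated by RKHS functions `z ↦ ⟪f, K z⟫`). If the
empirical measures `μ_n = (1/n)∑ δ_{x_i^{(n)}}` satisfy `MMD(μ, μ_n) → 0` (norm of
the difference of mean embeddings tends to `0`), then for every `x ∈ X` and `ε > 0`
there is `N` such that for all `n > N`, `min_i ‖x − x_i^{(n)}‖ ≤ ε`. -/
theorem stmt7 {d : ℕ} {H : Type*} [NormedAddCommGroup H] [InnerProductSpace ℝ H]
    [CompleteSpace H]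
    (μ : Measure (EuclideanSpace ℝ (Fin d))) [IsProbabilityMeasure μ]
    (X : Set (EuclideanSpace ℝ (Fin d)))
    (hX : ∀ x ∈ X, ∀ ε > (0 : ℝ), 0 < μ (Metric.ball x ε))
    (K : EuclideanSpace ℝ (Fin d) → H) (hK : Integrable K μ)
    (huniv : ∀ g : EuclideanSpace ℝ (Fin d) → ℝ, Continuous g →
      Tendsto g (cocompact (EuclideanSpace ℝ (Fin d))) (nhds 0) →
      ∀ ε > (0 : ℝ), ∃ f : H, ∀ z, |g z - ⟪f, K z⟫| ≤ ε)
    (pts : (n : ℕ) → Fin n → EuclideanSpace ℝ (Fin d))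
    (hmmd : Tendsto (fun n : ℕ => ‖(n : ℝ)⁻¹ • ∑ i, K (pts n i) - ∫ y, K y ∂μ‖)
      atTop (nhds 0)) :
    ∀ x ∈ X, ∀ ε > (0 : ℝ), ∃ N : ℕ, ∀ n > N, ∃ i : Fin n, ‖x - pts n i‖ ≤ ε := by
  intro x hx ε hε
  set g : EuclideanSpace ℝ (Fin d) → ℝ :=
    fun z => max (1 - (2/ε) * dist z x) 0 with hg_def
  have hgc : Continuous g :=
    Continuous.max (continuous_const.sub
      (continuous_const.mul (continuous_id.dist continuous_const))) continuous_const
  have hgsupp : HasCompactSupport g := by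
    apply HasCompactSupport.intro (isCompact_closedBall x (ε/2))
    intro z hz
    simp only [Metric.mem_closedBall, not_le] at hz
    have h1 : (2/ε) * dist z x > 1 := by
      have h2 := (div_pos (by norm_num : (0:ℝ)<2) hε)
      have h3 : (2/ε) * (ε/2) = 1 := by field_simp
      nlinarith [mul_lt_mul_of_pos_left hz h2]
    simp only [hg_def, max_eq_right (by linarith : 1 - (2/ε) * dist z x ≤ 0)]
  have hg0 : Tendsto g (cocompact (EuclideanSpace ℝ (Fin d))) (nhds 0) :=
    hgsupp.is_zero_at_infty
  have hgnn : ∀ z, 0 ≤ g z := fun z => le_max_right _ _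
  have hgint : Integrable g μ := hgc.integrable_of_hasCompactSupport hgsupp
  -- positivity of a = ∫ g dμ
  set a : ℝ := ∫ z, g z ∂μ with ha_def
  have ha : 0 < a := by
    rw [ha_def, integral_pos_iff_support_of_nonneg hgnn hgint]
    refine lt_of_lt_of_le (hX x hx (ε/2) (by linarith)) (measure_mono ?_)
    intro z hz
    simp only [Metric.mem_ball] at hz
    have h2 := (div_pos (by norm_num : (0:ℝ)<2) hε)
    have h3 : (2/ε) * (ε/2) = 1 := by field_simp
    have : (2/ε) * dist z x < 1 := by nlinarith [mul_lt_mul_of_pos_left hz h2]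
    have hp : 0 < g z := by simp only [hg_def]; exact lt_max_of_lt_left (by linarith)
    exact ne_of_gt hp
  obtain ⟨f, hf⟩ := huniv g hgc hg0 (a/4) (by linarith)
  -- mean embedding pairing
  have hKi : Integrable (fun y => ⟪f, K y⟫) μ := hK.const_inner f
  have hb : |a - ⟪f, ∫ y, K y ∂μ⟫| ≤ a/4 := by
    rw [← integral_inner hK f, ha_def, ← integral_sub hgint hKi]
    rw [← Real.norm_eq_abs]
    calc ‖∫ z, (g z - ⟪f, K z⟫) ∂μ‖ ≤ (a/4) * (μ Set.univ).toReal := by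
          apply norm_integral_le_of_norm_le_const
          filter_upwards with z
          rw [Real.norm_eq_abs]; exact hf z
      _ = a/4 := by simp
  -- choose N
  set δ : ℝ := a / (4 * (‖f‖ + 1)) with hδ_def
  have hfn : (0:ℝ) < ‖f‖ + 1 := by positivity
  have hδ : 0 < δ := by positivity
  obtain ⟨N, hN⟩ := (Metric.tendsto_atTop.mp hmmd) δ hδ
  refine ⟨N, fun n hn => ?_⟩
  have hN' := hN n (le_of_lt hn)
  rw [Real.dist_eq, sub_zero, abs_of_nonneg (norm_nonneg _)] at hN'
  have hn1 : (1:ℕ) ≤ n := Nat.one_le_iff_ne_zero.mpr (by omega)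
  have hnpos : (0:ℝ) < (n:ℝ) := by exact_mod_cast Nat.pos_of_ne_zero (by omega)
  -- pairing with empirical measure
  have hpair : ⟪f, (n : ℝ)⁻¹ • ∑ i, K (pts n i) - ∫ y, K y ∂μ⟫
      = (n : ℝ)⁻¹ * ∑ i, ⟪f, K (pts n i)⟫ - ⟪f, ∫ y, K y ∂μ⟫ := by
    rw [inner_sub_right, inner_smul_right, inner_sum]
  have hcs : |⟪f, (n : ℝ)⁻¹ • ∑ i, K (pts n i) - ∫ y, K y ∂μ⟫| ≤ a/4 := by
    calc |⟪f, (n : ℝ)⁻¹ • ∑ i, K (pts n i) - ∫ y, K y ∂μ⟫|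
        ≤ ‖f‖ * ‖(n : ℝ)⁻¹ • ∑ i, K (pts n i) - ∫ y, K y ∂μ‖ := abs_real_inner_le_norm _ _
      _ ≤ ‖f‖ * δ := by
          apply mul_le_mul_of_nonneg_left (le_of_lt hN') (norm_nonneg f)
      _ ≤ (‖f‖ + 1) * δ := by nlinarith
      _ = a/4 := by rw [hδ_def]; field_simp
  -- lower bound on empirical inner products
  have hS : a/2 ≤ (n : ℝ)⁻¹ * ∑ i, ⟪f, K (pts n i)⟫ := by
    rw [hpair] at hcs
    have h1 := abs_le.mp hcs
    have h2 := abs_le.mp hb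
    linarith [h1.1, h2.1, h2.2]
  -- lower bound on empirical g sums
  have hsumg : a/4 ≤ (n : ℝ)⁻¹ * ∑ i, g (pts n i) := by
    have hsum : ∑ i, ⟪f, K (pts n i)⟫ ≤ ∑ i, (g (pts n i) + a/4) := by
      apply Finset.sum_le_sum
      intro i _
      have := abs_le.mp (hf (pts n i))
      linarith [this.1]
    have hcard : ∑ _i : Fin n, (a/4 : ℝ) = n * (a/4) := by
      rw [Finset.sum_const, Finset.card_univ, Fintype.card_fin, nsmul_eq_mul]
    rw [Finset.sum_add_distrib, hcard] at hsum
    have hmul := mul_le_mul_of_nonneg_left hsum (le_of_lt (inv_pos.mpr hnpos))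
    rw [mul_add, ← mul_assoc, inv_mul_cancel₀ (ne_of_gt hnpos), one_mul] at hmul
    linarith
  -- extract a point with g > 0
  have hpos : 0 < ∑ i, g (pts n i) := by
    by_contra h
    push_neg at h
    have : (n : ℝ)⁻¹ * ∑ i, g (pts n i) ≤ 0 :=
      mul_nonpos_of_nonneg_of_nonpos (le_of_lt (inv_pos.mpr hnpos)) h
    linarith
  obtain ⟨i, -, hi⟩ : ∃ i ∈ Finset.univ, 0 < g (pts n i) := by
    by_contra h
    push_neg at h
    have : ∑ i, g (pts n i) ≤ 0 := Finset.sum_nonpos fun i hi => h i hi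
    linarith
  refine ⟨i, ?_⟩
  have : 0 < 1 - (2/ε) * dist (pts n i) x := by
    rcases lt_max_iff.mp hi with h | h
    · exact h
    · exact absurd h (lt_irrefl 0)
  have hd : dist (pts n i) x < ε/2 := by
    by_contra hcon
    push_neg at hcon
    have h2 := (div_pos (by norm_num : (0:ℝ)<2) hε)
    have h3 : (2/ε) * (ε/2) = 1 := by field_simp
    nlinarith [mul_le_mul_of_nonneg_left hcon h2.le]
  calc ‖x - pts n i‖ = dist (pts n i) x := by rw [← dist_eq_norm, dist_comm]
    _ ≤ ε := by linarith
end

section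
/- In the setting of the denseness lemma, the key quantitative step holds: if f ∈ C₀(R^d) satisfies 0 ≤ f ≤ 1, f = 1 on the ball B_ε(x) and f = 0 outside B_{2ε}(x), and f_ℓ ∈ H satisfies ‖f − f_ℓ‖_∞ ≤ μ(B_ε(x))/6, then for any probability measures μ, μ_n with MMD(μ, μ_n) < μ(B_ε(x))/(6‖f_ℓ‖_H), one has μ_n(B_{2ε}(x)) ≥ (1/2)μ(B_ε(x)) > 0. -/
open MeasureTheory Filter
open scoped RealInnerProductSpace

/-- The key quantitative step of the denseness lemma. If
`f ∈ C₀(ℝ^d)` satisfies `0 ≤ f ≤ 1`, `f = 1` on `B_ε(x)` and `f = 0` outside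
`B_{2ε}(x)`, and `f_ℓ ∈ H` (an RKHS with feature map `K`) satisfies
`‖f − f_ℓ‖_∞ ≤ μ(B_ε(x))/6`, then for probability measures `μ, μ_n` with
`MMD(μ, μ_n) < μ(B_ε(x))/(6‖f_ℓ‖_H)` one has
`μ_n(B_{2ε}(x)) ≥ (1/2) μ(B_ε(x)) > 0`. -/
theorem stmt8 {d : ℕ} {H : Type*} [NormedAddCommGroup H] [InnerProductSpace ℝ H]
    [CompleteSpace H]
    (μ μn : Measure (EuclideanSpace ℝ (Fin d)))
    [IsProbabilityMeasure μ] [IsProbabilityMeasure μn]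
    (K : EuclideanSpace ℝ (Fin d) → H) (hK : Integrable K μ) (hKn : Integrable K μn)
    (x : EuclideanSpace ℝ (Fin d)) (ε : ℝ) (hε : 0 < ε)
    (hpos : 0 < (μ (Metric.ball x ε)).toReal)
    (f : EuclideanSpace ℝ (Fin d) → ℝ)
    (hfc : Continuous f)
    (hf0 : Tendsto f (cocompact (EuclideanSpace ℝ (Fin d))) (nhds 0))
    (hf01 : ∀ z, f z ∈ Set.Icc (0 : ℝ) 1)
    (hf1 : ∀ z ∈ Metric.ball x ε, f z = 1)
    (hf2 : ∀ z ∉ Metric.ball x (2 * ε), f z = 0)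
    (fl : H)
    (hfl : ∀ z, |f z - ⟪fl, K z⟫| ≤ (μ (Metric.ball x ε)).toReal / 6)
    (hmmd : ‖∫ y, K y ∂μ - ∫ y, K y ∂μn‖
      < (μ (Metric.ball x ε)).toReal / (6 * ‖fl‖)) :
    (1 / 2) * (μ (Metric.ball x ε)).toReal ≤ (μn (Metric.ball x (2 * ε))).toReal ∧
      0 < (μn (Metric.ball x (2 * ε))).toReal := by
  set a := (μ (Metric.ball x ε)).toReal with ha
  -- fl ≠ 0
  have hflpos : 0 < ‖fl‖ := by
    rcases (norm_nonneg fl).lt_or_eq with h | h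
    · exact h
    · exfalso
      have h0 : a / (6 * ‖fl‖) = 0 := by rw [← h, mul_zero, div_zero]
      rw [h0] at hmmd
      exact absurd hmmd (norm_nonneg _).not_gt
  -- integrability of f
  have hcs : HasCompactSupport f :=
    HasCompactSupport.intro (isCompact_closedBall x (2 * ε))
      (fun z hz => hf2 z fun h => hz (Metric.ball_subset_closedBall h))
  have hfi : Integrable f μ := hfc.integrable_of_hasCompactSupport hcs
  have hfin : Integrable f μn := hfc.integrable_of_hasCompactSupport hcs
  set g : EuclideanSpace ℝ (Fin d) → ℝ := fun z => ⟪fl, K z⟫ with hg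
  have hgi : Integrable g μ := hK.const_inner fl
  have hgin : Integrable g μn := hKn.const_inner fl
  -- bound |∫ f - ∫ g| over each measure
  have I1 : |∫ z, f z ∂μ - ∫ z, g z ∂μ| ≤ a / 6 := by
    rw [← integral_sub hfi hgi, ← Real.norm_eq_abs]
    have h := norm_integral_le_of_norm_le_const (μ := μ)
      (f := fun z => f z - g z) (C := a / 6)
      (Eventually.of_forall fun z => by simpa using hfl z)
    simpa using h
  have I3 : |∫ z, f z ∂μn - ∫ z, g z ∂μn| ≤ a / 6 := by
    rw [← integral_sub hfin hgin, ← Real.norm_eq_abs]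
    have h := norm_integral_le_of_norm_le_const (μ := μn)
      (f := fun z => f z - g z) (C := a / 6)
      (Eventually.of_forall fun z => by simpa using hfl z)
    simpa using h
  -- MMD step
  have I2 : |∫ z, g z ∂μ - ∫ z, g z ∂μn| < a / 6 := by
    rw [hg, integral_inner hK fl, integral_inner hKn fl, ← inner_sub_right]
    calc |⟪fl, (∫ y, K y ∂μ) - ∫ y, K y ∂μn⟫|
        ≤ ‖fl‖ * ‖(∫ y, K y ∂μ) - ∫ y, K y ∂μn‖ := abs_real_inner_le_norm _ _
      _ < ‖fl‖ * (a / (6 * ‖fl‖)) := by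
          exact mul_lt_mul_of_pos_left hmmd hflpos
      _ = a / 6 := by field_simp
  -- lower bound on ∫ f dμ
  have La : a ≤ ∫ z, f z ∂μ := by
    have h1 : ∫ z in Metric.ball x ε, f z ∂μ = a := by
      rw [setIntegral_congr_fun measurableSet_ball
        (fun z hz => hf1 z hz : Set.EqOn f (fun _ => (1 : ℝ)) (Metric.ball x ε))]
      simp [ha]; rfl
    calc a = ∫ z in Metric.ball x ε, f z ∂μ := h1.symm
      _ ≤ ∫ z, f z ∂μ :=
          setIntegral_le_integral hfi (Eventually.of_forall fun z => (hf01 z).1)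
  -- upper bound on ∫ f dμn
  have Ub : ∫ z, f z ∂μn ≤ (μn (Metric.ball x (2 * ε))).toReal := by
    rw [← setIntegral_eq_integral_of_forall_compl_eq_zero fun z hz => hf2 z hz]
    calc ∫ z in Metric.ball x (2 * ε), f z ∂μn
        ≤ ∫ _ in Metric.ball x (2 * ε), (1 : ℝ) ∂μn :=
          setIntegral_mono_on hfin.integrableOn
            (integrableOn_const (measure_lt_top _ _).ne)
            measurableSet_ball (fun z _ => (hf01 z).2)
      _ = (μn (Metric.ball x (2 * ε))).toReal := by simp; rfl
  obtain ⟨a1, a2⟩ := abs_le.mp I1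
  obtain ⟨b1, b2⟩ := abs_lt.mp I2
  obtain ⟨c1, c2⟩ := abs_le.mp I3
  constructor <;> [skip; skip] <;> linarith
end

section
/- Stationary MMD points achieve the integration error bound |(1/n)∑_{i=1}^n f(x_i) − ∫ f dμ| ≤ |f|_n · MMD(μ, μ_n), where |f|_n = inf{‖r‖_H : f = g + r, g ∈ F_n, r ∈ H} and F_n = span({1} ∪ {∂_ℓ k(x_i,·) : i ≤ n, ℓ ≤ d}). -/
open MeasureTheory
open scoped RealInnerProductSpace

/-- Stationary MMD points achieve the integration error bound
`|(1/n)∑ f(x_i) − ∫ f dμ| ≤ |f|_n · MMD(μ, μ_n)` where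
`|f|_n = inf{‖r‖_H : f = g + r, g ∈ F_n, r ∈ H}` and
`F_n = span({1} ∪ {∂_ℓ k(x_i,·)})`. The RKHS is represented by a feature map
`K : ℝ^d → H` with kernel `k x y = ⟪K x, K y⟫`, RKHS functions `y ↦ ⟪r, K y⟫`,
derivative features `∂_ℓ k(x,·) = (y ↦ fderiv of z ↦ ⟪K z, K y⟫ at x in direction
e_ℓ)` and `MMD(μ, μ_n)` the norm of the difference of mean embeddings. The points
satisfy the stationarity condition `(1/n)∑_j ∇₁k(x_i,x_j) = ∫ ∇₁k(x_i,y) dμ(y)`. -/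
theorem stmt9 {d : ℕ} {H : Type*} [NormedAddCommGroup H] [InnerProductSpace ℝ H]
    [CompleteSpace H]
    (μ : Measure (EuclideanSpace ℝ (Fin d))) [IsProbabilityMeasure μ]
    (K : EuclideanSpace ℝ (Fin d) → H) (hK : Integrable K μ)
    (hdiff : ∀ y, Differentiable ℝ (fun z => ⟪K z, K y⟫))
    (n : ℕ) (hn : 0 < n) (x : Fin n → EuclideanSpace ℝ (Fin d))
    (hDint : ∀ (i : Fin n) (ℓ : Fin d), Integrable
      (fun y => fderiv ℝ (fun z => ⟪K z, K y⟫) (x i) (EuclideanSpace.single ℓ 1)) μ)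
    (hstat : ∀ (i : Fin n) (ℓ : Fin d),
      (n : ℝ)⁻¹ * ∑ j, fderiv ℝ (fun z => ⟪K z, K (x j)⟫) (x i)
          (EuclideanSpace.single ℓ 1)
        = ∫ y, fderiv ℝ (fun z => ⟪K z, K y⟫) (x i) (EuclideanSpace.single ℓ 1) ∂μ)
    (f : EuclideanSpace ℝ (Fin d) → ℝ)
    (hdecomp : ∃ g : EuclideanSpace ℝ (Fin d) → ℝ, ∃ r : H,
      g ∈ Submodule.span ℝ
        ({fun _ => (1 : ℝ)} ∪
          {g' : EuclideanSpace ℝ (Fin d) → ℝ | ∃ (i : Fin n) (ℓ : Fin d),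
            g' = fun y => fderiv ℝ (fun z => ⟪K z, K y⟫) (x i)
              (EuclideanSpace.single ℓ 1)}) ∧
      f = g + fun y => ⟪r, K y⟫) :
    |(n : ℝ)⁻¹ * ∑ i, f (x i) - ∫ y, f y ∂μ|
      ≤ sInf {c : ℝ | ∃ g : EuclideanSpace ℝ (Fin d) → ℝ, ∃ r : H,
            g ∈ Submodule.span ℝ
              ({fun _ => (1 : ℝ)} ∪
                {g' : EuclideanSpace ℝ (Fin d) → ℝ | ∃ (i : Fin n) (ℓ : Fin d),
                  g' = fun y => fderiv ℝ (fun z => ⟪K z, K y⟫) (x i)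
                    (EuclideanSpace.single ℓ 1)}) ∧
            (f = g + fun y => ⟪r, K y⟫) ∧ c = ‖r‖}
        * ‖(n : ℝ)⁻¹ • ∑ i, K (x i) - ∫ y, K y ∂μ‖ := by
  classical
  have hn' : (n : ℝ) ≠ 0 := Nat.cast_ne_zero.mpr hn.ne'
  set m : H := (n : ℝ)⁻¹ • ∑ i, K (x i) - ∫ y, K y ∂μ with hm
  -- exactness on the span
  have hexact : ∀ g' : EuclideanSpace ℝ (Fin d) → ℝ,
      g' ∈ Submodule.span ℝ
        ({fun _ => (1 : ℝ)} ∪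
          {g' : EuclideanSpace ℝ (Fin d) → ℝ | ∃ (i : Fin n) (ℓ : Fin d),
            g' = fun y => fderiv ℝ (fun z => ⟪K z, K y⟫) (x i)
              (EuclideanSpace.single ℓ 1)}) →
      Integrable g' μ ∧ (n : ℝ)⁻¹ * ∑ i, g' (x i) = ∫ y, g' y ∂μ := by
    intro g' hg'
    induction hg' using Submodule.span_induction with
    | mem g hg =>
      rcases hg with hg | hg
      · rcases hg with rfl
        refine ⟨integrable_const 1, ?_⟩
        simp [Finset.sum_const, inv_mul_cancel₀ hn']
      · obtain ⟨i, ℓ, rfl⟩ := hg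
        exact ⟨hDint i ℓ, hstat i ℓ⟩
    | zero =>
      refine ⟨integrable_zero _ _ _, by simp⟩
    | add g₁ g₂ _ _ h₁ h₂ =>
      refine ⟨h₁.1.add h₂.1, ?_⟩
      have hi := integral_add h₁.1 h₂.1
      simp only [Pi.add_apply] at hi ⊢
      rw [Finset.sum_add_distrib, mul_add, h₁.2, h₂.2, ← hi]
    | smul c g₁ _ h₁ =>
      refine ⟨h₁.1.smul c, ?_⟩
      simp only [Pi.smul_apply, smul_eq_mul]
      rw [← Finset.mul_sum, ← mul_assoc, mul_comm (n:ℝ)⁻¹ c, mul_assoc, h₁.2,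
        show (∫ y, c * g₁ y ∂μ) = c * ∫ y, g₁ y ∂μ from integral_const_mul c _]
  -- key: for any valid decomposition, the error equals ⟪r, m⟫
  have key : ∀ (g : EuclideanSpace ℝ (Fin d) → ℝ) (r : H),
      g ∈ Submodule.span ℝ
        ({fun _ => (1 : ℝ)} ∪
          {g' : EuclideanSpace ℝ (Fin d) → ℝ | ∃ (i : Fin n) (ℓ : Fin d),
            g' = fun y => fderiv ℝ (fun z => ⟪K z, K y⟫) (x i)
              (EuclideanSpace.single ℓ 1)}) →
      f = g + (fun y => ⟪r, K y⟫) →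
      (n : ℝ)⁻¹ * ∑ i, f (x i) - ∫ y, f y ∂μ = ⟪r, m⟫ := by
    intro g r hg hf
    obtain ⟨hgint, hgex⟩ := hexact g hg
    have hrint : Integrable (fun y => ⟪r, K y⟫) μ :=
      ContinuousLinearMap.integrable_comp (innerSL ℝ r) hK
    have hsum : (n : ℝ)⁻¹ * ∑ i, f (x i)
        = (n : ℝ)⁻¹ * ∑ i, g (x i) + (n : ℝ)⁻¹ * ∑ i, ⟪r, K (x i)⟫ := by
      rw [hf]; simp [Finset.sum_add_distrib, mul_add]
    have hint : ∫ y, f y ∂μ = (∫ y, g y ∂μ) + ∫ y, ⟪r, K y⟫ ∂μ := by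
      rw [hf]; exact integral_add hgint hrint
    rw [hsum, hint, hgex]
    have h1 : (n : ℝ)⁻¹ * ∑ i, ⟪r, K (x i)⟫ = ⟪r, (n : ℝ)⁻¹ • ∑ i, K (x i)⟫ := by
      rw [inner_smul_right, inner_sum]
    have h2 : (∫ y, ⟪r, K y⟫ ∂μ) = ⟪r, ∫ y, K y ∂μ⟫ :=
      ContinuousLinearMap.integral_comp_comm (innerSL ℝ r) hK
    rw [h1, h2, hm, inner_sub_right]
    ring
  -- main argument
  obtain ⟨g₀, r₀, hg₀, hf₀⟩ := hdecomp
  set S : Set ℝ := {c : ℝ | ∃ g : EuclideanSpace ℝ (Fin d) → ℝ, ∃ r : H,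
            g ∈ Submodule.span ℝ
              ({fun _ => (1 : ℝ)} ∪
                {g' : EuclideanSpace ℝ (Fin d) → ℝ | ∃ (i : Fin n) (ℓ : Fin d),
                  g' = fun y => fderiv ℝ (fun z => ⟪K z, K y⟫) (x i)
                    (EuclideanSpace.single ℓ 1)}) ∧
            (f = g + fun y => ⟪r, K y⟫) ∧ c = ‖r‖} with hS
  have hne : S.Nonempty := ⟨‖r₀‖, g₀, r₀, hg₀, hf₀, rfl⟩
  set E : ℝ := (n : ℝ)⁻¹ * ∑ i, f (x i) - ∫ y, f y ∂μ with hE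
  have hbound : ∀ c ∈ S, |E| ≤ c * ‖m‖ := by
    rintro c ⟨g, r, hg, hf, rfl⟩
    rw [key g r hg hf]
    exact abs_real_inner_le_norm r m
  rcases eq_or_lt_of_le (norm_nonneg m) with h0 | h0
  · have h := hbound _ ⟨g₀, r₀, hg₀, hf₀, rfl⟩
    rw [← h0, mul_zero] at h ⊢
    exact h
  · have hdiv : |E| / ‖m‖ ≤ sInf S := by
      refine le_csInf hne fun c hc => ?_
      exact (div_le_iff₀ h0).mpr (hbound c hc)
    calc |E| = |E| / ‖m‖ * ‖m‖ := by field_simp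
      _ ≤ sInf S * ‖m‖ := mul_le_mul_of_nonneg_right hdiv h0.le
end

section
/- For the polynomial kernel k(x,y) = (xᵀy + 1)^r on R^d, if the feature matrix Φ_r = [φ_r(x_1),…,φ_r(x_n)] ∈ R^{m×n} (where φ_r collects all monomials of total degree between 1 and r, m = C(d+r, r) − 1) has rank m, then span{∂_ℓ k(x_i, ·) : 1 ≤ i ≤ n, 1 ≤ ℓ ≤ d} equals the space of all polynomials of degree at most r with zero constant term. -/
open scoped RealInnerProductSpace

open MvPolynomial

noncomputable section StmtAux

variable (d r : ℕ)

abbrev stmtPA := MvPolynomial (Fin d) ℝ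

/-- evaluation as a linear map from polynomials to functions -/
def stmtE : MvPolynomial (Fin d) ℝ →ₗ[ℝ] (EuclideanSpace ℝ (Fin d) → ℝ) where
  toFun p := fun y => MvPolynomial.eval (fun ℓ => y ℓ) p
  map_add' p q := by funext y; simp
  map_smul' c p := by
    funext y
    simp [MvPolynomial.smul_eq_C_mul]

/-- polynomials of degree ≤ r with zero constant coefficient -/
def stmtV : Submodule ℝ (MvPolynomial (Fin d) ℝ) where
  carrier := {p | p.totalDegree ≤ r ∧ MvPolynomial.coeff 0 p = 0}
  add_mem' := by
    rintro p q ⟨hp1, hp2⟩ ⟨hq1, hq2⟩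
    exact ⟨le_trans (totalDegree_add p q) (max_le hp1 hq1), by simp [coeff_add, hp2, hq2]⟩
  zero_mem' := by simp
  smul_mem' := by
    rintro c p ⟨hp1, hp2⟩
    refine ⟨le_trans ?_ hp1, by simp [hp2]⟩
    rw [MvPolynomial.smul_eq_C_mul]
    exact le_trans (totalDegree_mul _ _) (by simp)

/-- the derivative polynomial `r (v·Y+1)^{r-1} Y_ℓ` -/
def stmtq (v : Fin d → ℝ) (ℓ : Fin d) : MvPolynomial (Fin d) ℝ :=
  C (r : ℝ) * (∑ j, C (v j) * X j + 1) ^ (r - 1) * X ℓ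

lemma stmtq_mem (hr : 0 < r) (v : Fin d → ℝ) (ℓ : Fin d) : stmtq d r v ℓ ∈ stmtV d r := by
  constructor
  · refine le_trans (totalDegree_mul _ _) ?_
    have h1 : (C (r:ℝ) * (∑ j, C (v j) * X j + 1) ^ (r - 1)).totalDegree ≤ r - 1 := by
      refine le_trans (totalDegree_mul _ _) ?_
      simp only [totalDegree_C, zero_add]
      refine le_trans (totalDegree_pow _ _) ?_
      have : (∑ j, C (v j) * X j + 1 : MvPolynomial (Fin d) ℝ).totalDegree ≤ 1 := by
        refine le_trans (totalDegree_add _ _) (max_le ?_ (by simp))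
        refine le_trans (totalDegree_finset_sum _ _) ?_
        refine Finset.sup_le fun j _ => ?_
        refine le_trans (totalDegree_mul _ _) ?_
        simp [totalDegree_X]
      calc (r-1) * (∑ j, C (v j) * X j + 1 : MvPolynomial (Fin d) ℝ).totalDegree
          ≤ (r-1) * 1 := Nat.mul_le_mul_left _ this
        _ = r - 1 := by ring
    have h2 : (X ℓ : MvPolynomial (Fin d) ℝ).totalDegree ≤ 1 := by simp [totalDegree_X]
    omega
  · have : MvPolynomial.coeff 0 (stmtq d r v ℓ) = constantCoeff (stmtq d r v ℓ) := rfl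
    rw [this]
    simp [stmtq]

/-- the generic kernel base `1 + ∑ x_j Y_j`, with outer variables `x` and
coefficients that are polynomials in `Y` -/
def stmtS : MvPolynomial (Fin d) (stmtPA d) :=
  1 + ∑ j, monomial (Finsupp.single j 1) (X j : stmtPA d)

lemma stmt_degree_sum (α : Fin d →₀ ℕ) : (α.sum fun _ k => k) = Finsupp.degree α := rfl

lemma stmt_degree_add (a b : Fin d →₀ ℕ) :
    Finsupp.degree (a + b) = Finsupp.degree a + Finsupp.degree b := by
  simp only [Finsupp.degree_eq_weight_one]
  exact map_add _ _ _

lemma stmt_degree_single (j : Fin d) : Finsupp.degree (Finsupp.single j 1) = 1 := by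
  exact Finsupp.degree_single j 1

lemma stmt_degree_sub (α : Fin d →₀ ℕ) (j : Fin d) (h : Finsupp.single j 1 ≤ α) :
    Finsupp.degree (α - Finsupp.single j 1) + 1 = Finsupp.degree α := by
  conv_rhs => rw [← tsub_add_cancel_of_le h]
  rw [stmt_degree_add, stmt_degree_single]

/-- coefficients of `S^m` are nonnegative multiples of the matching monomial,
positive when the degree is at most `m` -/
lemma coeff_stmtS_pow (m : ℕ) (α : Fin d →₀ ℕ) :
    ∃ c : ℕ, MvPolynomial.coeff α (stmtS d ^ m) = (c : ℝ) • monomial α (1:ℝ) ∧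
      (Finsupp.degree α ≤ m → 0 < c) := by
  induction m generalizing α with
  | zero =>
    rcases eq_or_ne α 0 with rfl | hα
    · exact ⟨1, by simp [coeff_one], fun _ => one_pos⟩
    · refine ⟨0, by simp [coeff_one, hα.symm], fun h => absurd ?_ hα⟩
      rw [← Finsupp.degree_eq_zero_iff]
      omega
  | succ m ih =>
    classical
    set M : stmtPA d := monomial α (1:ℝ) with hM
    choose c' hc' hc'pos using fun β => ih β
    refine ⟨c' α + ∑ j, if Finsupp.single j 1 ≤ α then c' (α - Finsupp.single j 1) else 0, ?_, ?_⟩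
    · have hsplit : MvPolynomial.coeff α (stmtS d ^ (m+1))
          = MvPolynomial.coeff α (stmtS d ^ m)
            + ∑ j, MvPolynomial.coeff α
                (stmtS d ^ m * monomial (Finsupp.single j 1) (X j : stmtPA d)) := by
        have hgen : ∀ P : MvPolynomial (Fin d) (stmtPA d), MvPolynomial.coeff α (P * stmtS d)
            = MvPolynomial.coeff α P
              + ∑ j, MvPolynomial.coeff α (P * monomial (Finsupp.single j 1) (X j : stmtPA d)) := by
          intro P
          rw [stmtS, mul_add, mul_one, coeff_add, Finset.mul_sum, coeff_sum]
        rw [pow_succ, hgen]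
      rw [hsplit, hc' α]
      have hterm : ∀ j, MvPolynomial.coeff α
            (stmtS d ^ m * monomial (Finsupp.single j 1) (X j : stmtPA d))
          = ((if Finsupp.single j 1 ≤ α then c' (α - Finsupp.single j 1) else 0 : ℕ) : ℝ) • M := by
        intro j
        rw [coeff_mul_monomial']
        split_ifs with h
        · rw [hc' (α - Finsupp.single j 1), smul_mul_assoc]
          congr 1
          show monomial (α - Finsupp.single j 1) 1 * X j = M
          rw [X, monomial_mul, mul_one, tsub_add_cancel_of_le h, hM]
        · simp
      rw [Finset.sum_congr rfl (fun j _ => hterm j), ← Finset.sum_smul, ← add_smul]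
      push_cast
      ring_nf
      rw [hM]
    · intro hdeg
      rcases le_or_gt (Finsupp.degree α) m with h | h
      · have := hc'pos α h
        omega
      · have hα : α ≠ 0 := by
          intro h0
          rw [h0, map_zero] at h
          omega
        obtain ⟨j, hj⟩ : ∃ j, α j ≠ 0 := by
          by_contra hc
          push_neg at hc
          exact hα (Finsupp.ext hc)
        have hle : Finsupp.single j 1 ≤ α :=
          (Finsupp.single_le_iff).mpr (Nat.one_le_iff_ne_zero.mpr hj)
        have hdsub : Finsupp.degree (α - Finsupp.single j 1) ≤ m := by
          have := stmt_degree_sub d α j hle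
          omega
        have hpos := hc'pos (α - Finsupp.single j 1) hdsub
        have hle2 : (if Finsupp.single j 1 ≤ α then c' (α - Finsupp.single j 1) else 0)
            ≤ ∑ j', if Finsupp.single j' 1 ≤ α then c' (α - Finsupp.single j' 1) else 0 :=
          Finset.single_le_sum
            (f := fun j' => if Finsupp.single j' 1 ≤ α then c' (α - Finsupp.single j' 1) else 0)
            (fun _ _ => Nat.zero_le _) (Finset.mem_univ j)
        rw [if_pos hle] at hle2
        omega

variable (φ : Module.Dual ℝ (stmtPA d))

/-- apply a functional coefficient-wise -/
def stmtPhi (P : MvPolynomial (Fin d) (stmtPA d)) : stmtPA d :=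
  ∑ α ∈ P.support, monomial α (φ (MvPolynomial.coeff α P))

lemma coeff_stmtPhi (P : MvPolynomial (Fin d) (stmtPA d)) (β : Fin d →₀ ℕ) :
    MvPolynomial.coeff β (stmtPhi d φ P) = φ (MvPolynomial.coeff β P) := by
  classical
  rw [stmtPhi, coeff_sum]
  simp only [coeff_monomial]
  rw [Finset.sum_ite_eq' P.support β (fun α => φ (MvPolynomial.coeff α P))]
  split_ifs with h
  · rfl
  · rw [notMem_support_iff.mp h, map_zero]

lemma support_stmtPhi (P : MvPolynomial (Fin d) (stmtPA d)) :
    (stmtPhi d φ P).support ⊆ P.support := by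
  intro β hβ
  rw [mem_support_iff] at hβ ⊢
  intro h0
  rw [coeff_stmtPhi, h0, map_zero] at hβ
  exact hβ rfl

lemma totalDegree_stmtPhi_le (P : MvPolynomial (Fin d) (stmtPA d)) :
    (stmtPhi d φ P).totalDegree ≤ P.totalDegree :=
  Finset.sup_mono (support_stmtPhi d φ P)

lemma eval_stmtPhi (P : MvPolynomial (Fin d) (stmtPA d)) (z : Fin d → ℝ) :
    MvPolynomial.eval z (stmtPhi d φ P)
      = φ (MvPolynomial.eval (fun j => (C (z j) : stmtPA d)) P) := by
  classical
  conv_rhs => rw [P.as_sum, map_sum, map_sum]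
  rw [stmtPhi, map_sum]
  refine Finset.sum_congr rfl fun α _ => ?_
  rw [eval_monomial, eval_monomial]
  have hprod : (Finsupp.prod α fun j e => (C (z j) : stmtPA d) ^ e)
      = C (Finsupp.prod α fun j e => z j ^ e) := by
    rw [Finsupp.prod, Finsupp.prod, map_prod]
    exact Finset.prod_congr rfl fun j _ => by rw [map_pow]
  have hsm : (MvPolynomial.coeff α P) * C (Finsupp.prod α fun j e => z j ^ e)
      = (Finsupp.prod α fun j e => z j ^ e) • (MvPolynomial.coeff α P) := by
    rw [MvPolynomial.smul_eq_C_mul, mul_comm]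
  rw [hprod, hsm, map_smul, smul_eq_mul, mul_comm]

/-- the generic derivative polynomial: `r Y_ℓ (x·Y+1)^{r-1}` with outer variables `x` -/
def stmtP (ℓ : Fin d) : MvPolynomial (Fin d) (stmtPA d) :=
  C (C (r:ℝ) * X ℓ : stmtPA d) * stmtS d ^ (r - 1)

lemma eval_stmtP (v : Fin d → ℝ) (ℓ : Fin d) :
    MvPolynomial.eval (fun j => (C (v j) : stmtPA d)) (stmtP d r ℓ) = stmtq d r v ℓ := by
  rw [stmtP, eval_mul, eval_C, eval_pow]
  have hS : MvPolynomial.eval (fun j => (C (v j) : stmtPA d)) (stmtS d)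
      = ∑ j, C (v j) * X j + 1 := by
    rw [stmtS, map_add, map_one, map_sum]
    rw [add_comm]
    congr 1
    refine Finset.sum_congr rfl fun j _ => ?_
    rw [eval_monomial, Finsupp.prod_single_index (by rw [pow_zero]), pow_one, mul_comm]
  rw [hS, stmtq]
  ring

set_option synthInstance.maxHeartbeats 1000000 in
/-- Main lemma: every polynomial of degree ≤ r with zero constant term lies in the
span of the derivative polynomials. -/
lemma stmt_span (n : ℕ) (hr : 0 < r) (z : Fin n → Fin d → ℝ)
    (hrank : ∀ p : MvPolynomial (Fin d) ℝ, p.totalDegree ≤ r →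
      MvPolynomial.coeff 0 p = 0 →
      (∀ i, MvPolynomial.eval (z i) p = 0) → p = 0) :
    stmtV d r ≤ Submodule.span ℝ {q : MvPolynomial (Fin d) ℝ | ∃ i ℓ, q = stmtq d r (z i) ℓ} := by
  classical
  intro p hp
  by_contra hmem
  obtain ⟨φ, hφp, hφbot⟩ := Submodule.exists_dual_map_eq_bot_of_notMem hmem inferInstance
  have hφq : ∀ i ℓ, φ (stmtq d r (z i) ℓ) = 0 := by
    intro i ℓ
    have hq : stmtq d r (z i) ℓ ∈
        Submodule.span ℝ {q : MvPolynomial (Fin d) ℝ | ∃ i ℓ, q = stmtq d r (z i) ℓ} :=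
      Submodule.subset_span ⟨i, ℓ, rfl⟩
    have hmem' := Submodule.mem_map_of_mem (f := φ) hq
    rw [hφbot] at hmem'
    exact (Submodule.mem_bot ℝ).mp hmem'
  -- define `Q_ℓ := Φ (P_ℓ)` and `R := ∑ ℓ, X ℓ * Q_ℓ`
  set Qp : Fin d → stmtPA d := fun ℓ => stmtPhi d φ (stmtP d r ℓ) with hQp
  set Rp : stmtPA d := ∑ ℓ, X ℓ * Qp ℓ with hRp
  -- degree bound
  have hSdeg : (stmtS d).totalDegree ≤ 1 := by
    rw [stmtS]
    refine le_trans (totalDegree_add _ _) (max_le (by simp) ?_)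
    refine le_trans (totalDegree_finset_sum _ _) ?_
    refine Finset.sup_le fun j _ => ?_
    rcases eq_or_ne (X j : stmtPA d) 0 with h | h
    · rw [h, monomial_zero, totalDegree_zero]; omega
    · rw [totalDegree_monomial _ h, stmt_degree_sum, stmt_degree_single]
  have hRdeg : Rp.totalDegree ≤ r := by
    rw [hRp]
    refine le_trans (totalDegree_finset_sum _ _) ?_
    refine Finset.sup_le fun ℓ _ => ?_
    refine le_trans (totalDegree_mul _ _) ?_
    have h1 : (Qp ℓ).totalDegree ≤ r - 1 := by
      refine le_trans (totalDegree_stmtPhi_le d φ _) ?_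
      rw [stmtP]
      refine le_trans (totalDegree_mul _ _) ?_
      rw [totalDegree_C, zero_add]
      refine le_trans (totalDegree_pow _ _) ?_
      calc (r-1) * (stmtS d).totalDegree ≤ (r-1) * 1 := Nat.mul_le_mul_left _ hSdeg
        _ = r - 1 := by ring
    have h2 : (X ℓ : stmtPA d).totalDegree ≤ 1 := by simp [totalDegree_X]
    omega
  -- zero constant term
  have hRc : MvPolynomial.coeff 0 Rp = 0 := by
    rw [hRp, coeff_sum]
    refine Finset.sum_eq_zero fun ℓ _ => ?_
    rw [coeff_X_mul']
    simp
  -- vanishing at the sample points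
  have hRz : ∀ i, MvPolynomial.eval (z i) Rp = 0 := by
    intro i
    rw [hRp, map_sum]
    refine Finset.sum_eq_zero fun ℓ _ => ?_
    rw [eval_mul, hQp, eval_stmtPhi, eval_stmtP, hφq, mul_zero]
  have hR0 : Rp = 0 := hrank Rp hRdeg hRc hRz
  -- conclude that φ kills all relevant monomials
  have hφmono : ∀ β : Fin d →₀ ℕ, β ≠ 0 → Finsupp.degree β ≤ r →
      φ (monomial β 1) = 0 := by
    intro β hβ0 hβr
    have h0 : MvPolynomial.coeff β Rp = 0 := by rw [hR0, coeff_zero]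
    choose c hc hcpos using fun ℓ => coeff_stmtS_pow d (r-1) (β - Finsupp.single ℓ 1)
    have hterm : ∀ ℓ, MvPolynomial.coeff β (X ℓ * Qp ℓ)
        = if ℓ ∈ β.support then ((c ℓ * r : ℕ) : ℝ) * φ (monomial β 1) else 0 := by
      intro ℓ
      rw [coeff_X_mul']
      split_ifs with h
      · have hle : Finsupp.single ℓ 1 ≤ β := by
          rw [Finsupp.single_le_iff]
          exact Nat.one_le_iff_ne_zero.mpr (Finsupp.mem_support_iff.mp h)
        rw [hQp, coeff_stmtPhi, stmtP, coeff_C_mul, hc ℓ]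
        have hmul : (C (r:ℝ) * X ℓ : stmtPA d) * ((c ℓ : ℝ) • monomial (β - Finsupp.single ℓ 1) 1)
            = ((c ℓ * r : ℕ) : ℝ) • monomial β 1 := by
          rw [mul_smul_comm, mul_assoc, X, monomial_mul, mul_one]
          rw [add_comm, tsub_add_cancel_of_le hle, ← MvPolynomial.smul_eq_C_mul, smul_smul]
          push_cast
          ring_nf
        rw [hmul, map_smul, smul_eq_mul]
      · rfl
    have hsum : MvPolynomial.coeff β Rp
        = ((∑ ℓ ∈ β.support, (c ℓ * r : ℕ) : ℕ) : ℝ) * φ (monomial β 1) := by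
      rw [hRp, coeff_sum, Finset.sum_congr rfl fun ℓ _ => hterm ℓ]
      rw [Finset.sum_ite_mem, Finset.univ_inter, ← Finset.sum_mul]
      push_cast
      ring_nf
      rw [mul_comm]
      congr 1
      exact Finset.sum_congr rfl fun _ _ => mul_comm _ _
    rw [hsum] at h0
    rcases mul_eq_zero.mp h0 with h | h
    · exfalso
      obtain ⟨ℓ, hℓ⟩ := Finsupp.support_nonempty_iff.mpr hβ0
      have hle : Finsupp.single ℓ 1 ≤ β := by
        rw [Finsupp.single_le_iff]
        exact Nat.one_le_iff_ne_zero.mpr (Finsupp.mem_support_iff.mp hℓ)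
      have hdsub : Finsupp.degree (β - Finsupp.single ℓ 1) ≤ r - 1 := by
        have := stmt_degree_sub d β ℓ hle
        omega
      have hpos : 0 < c ℓ * r := Nat.mul_pos (hcpos ℓ hdsub) hr
      have hsle : c ℓ * r ≤ ∑ ℓ' ∈ β.support, c ℓ' * r :=
        Finset.single_le_sum (f := fun ℓ' => c ℓ' * r) (fun _ _ => Nat.zero_le _) hℓ
      have : (0:ℝ) < ((∑ ℓ' ∈ β.support, c ℓ' * r : ℕ) : ℝ) := by
        have : 0 < ∑ ℓ' ∈ β.support, c ℓ' * r := by omega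
        exact_mod_cast this
      exact absurd h (ne_of_gt this)
    · exact h
  -- finally, φ p = 0, contradiction
  have hφp0 : φ p = 0 := by
    conv_lhs => rw [p.as_sum, map_sum]
    refine Finset.sum_eq_zero fun β hβ => ?_
    have hmono : monomial β (MvPolynomial.coeff β p)
        = (MvPolynomial.coeff β p) • monomial β (1:ℝ) := by
      rw [smul_monomial, smul_eq_mul, mul_one]
    rw [hmono, map_smul, smul_eq_mul]
    have hβ0 : β ≠ 0 := by
      intro h0
      rw [h0] at hβ
      exact (mem_support_iff.mp hβ) hp.2
    have hβr : Finsupp.degree β ≤ r := by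
      rw [← stmt_degree_sum]
      exact le_trans (le_totalDegree hβ) hp.1
    rw [hφmono β hβ0 hβr, mul_zero]
  exact hφp hφp0

end StmtAux

/-- For the polynomial kernel `k(x,y) = (xᵀy + 1)^r` on `ℝ^d`
(whose partial derivatives are `∂_ℓ k(x,y) = r (xᵀy+1)^{r−1} y_ℓ`), if the feature
matrix of monomials of degree `1,…,r` at the points `x_1,…,x_n` has full row rank —
equivalently, no nonzero polynomial of total degree at most `r` with zero constant
term vanishes at all of the points — then
`span{∂_ℓ k(x_i,·) : i ≤ n, ℓ ≤ d}` equals the space of all polynomial functions of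
degree at most `r` with zero constant term. -/
theorem stmt11 (d r : ℕ) (hr : 0 < r) (n : ℕ)
    (x : Fin n → EuclideanSpace ℝ (Fin d))
    (hrank : ∀ p : MvPolynomial (Fin d) ℝ, p.totalDegree ≤ r →
      MvPolynomial.coeff 0 p = 0 →
      (∀ i, MvPolynomial.eval (fun ℓ => x i ℓ) p = 0) → p = 0) :
    (Submodule.span ℝ
        {g : EuclideanSpace ℝ (Fin d) → ℝ | ∃ (i : Fin n) (ℓ : Fin d),
          g = fun y => (r : ℝ) * (⟪x i, y⟫ + 1) ^ (r - 1) * y ℓ}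
      : Set (EuclideanSpace ℝ (Fin d) → ℝ))
    = {g : EuclideanSpace ℝ (Fin d) → ℝ | ∃ p : MvPolynomial (Fin d) ℝ,
        p.totalDegree ≤ r ∧ MvPolynomial.coeff 0 p = 0 ∧
        g = fun y => MvPolynomial.eval (fun ℓ => y ℓ) p} := by
  classical
  set z : Fin n → Fin d → ℝ := fun i j => x i j with hz
  have hEq : ∀ (i : Fin n) (ℓ : Fin d), stmtE d (stmtq d r (z i) ℓ)
      = fun y : EuclideanSpace ℝ (Fin d) => (r : ℝ) * (⟪x i, y⟫ + 1) ^ (r - 1) * y ℓ := by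
    intro i ℓ
    funext y
    show MvPolynomial.eval (fun j => y j) (stmtq d r (z i) ℓ) = _
    have hinner : ⟪x i, y⟫ = ∑ j, x i j * y j := by
      simp [PiLp.inner_apply, RCLike.inner_apply, conj_trivial]
      exact Finset.sum_congr rfl fun j _ => mul_comm _ _
    rw [stmtq, MvPolynomial.eval_mul, MvPolynomial.eval_mul, MvPolynomial.eval_C,
      MvPolynomial.eval_X, MvPolynomial.eval_pow, map_add, map_one, map_sum, hinner]
    simp [MvPolynomial.eval_mul, MvPolynomial.eval_C, MvPolynomial.eval_X]
    exact Or.inl (Or.inl rfl)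
  set Qset : Set (MvPolynomial (Fin d) ℝ) := {q | ∃ i ℓ, q = stmtq d r (z i) ℓ} with hQset
  have hS : {g : EuclideanSpace ℝ (Fin d) → ℝ | ∃ (i : Fin n) (ℓ : Fin d),
      g = fun y => (r : ℝ) * (⟪x i, y⟫ + 1) ^ (r - 1) * y ℓ} = stmtE d '' Qset := by
    ext g
    constructor
    · rintro ⟨i, ℓ, rfl⟩
      exact ⟨stmtq d r (z i) ℓ, ⟨i, ℓ, rfl⟩, hEq i ℓ⟩
    · rintro ⟨q, ⟨i, ℓ, rfl⟩, rfl⟩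
      exact ⟨i, ℓ, hEq i ℓ⟩
  have hspanQ : Submodule.span ℝ Qset = stmtV d r := by
    refine le_antisymm (Submodule.span_le.mpr ?_) (stmt_span d r n hr z hrank)
    rintro q ⟨i, ℓ, rfl⟩
    exact stmtq_mem d r hr (z i) ℓ
  have hspan : Submodule.span ℝ {g : EuclideanSpace ℝ (Fin d) → ℝ | ∃ (i : Fin n) (ℓ : Fin d),
      g = fun y => (r : ℝ) * (⟪x i, y⟫ + 1) ^ (r - 1) * y ℓ}
      = (stmtV d r).map (stmtE d) := by
    rw [hS, Submodule.span_image, hspanQ]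
  rw [hspan]
  ext g
  constructor
  · rintro ⟨p, ⟨hdeg, hc⟩, rfl⟩
    exact ⟨p, hdeg, hc, rfl⟩
  · rintro ⟨p, hdeg, hc, rfl⟩
    exact ⟨p, ⟨hdeg, hc⟩, rfl⟩
end

section
/- Let T_0 = T − 2(κd²)^{-1}T^{2α}log T with 0 ≤ α < 1/2 and β_t ≍ t^{−α}. Then the weighted sum ∑_{t=1}^{T−1} β_t·exp(−(κd²/2)∑_{s=t+1}^{T−1}γβ_s²) is O(T^α log T) as T → ∞ (for fixed γ, κ, d > 0). -/
open Finset Real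

lemma aux_exp_le (x : ℝ) (hx : 0 < x) (k : ℕ) :
    Real.exp (-x) ≤ (k.factorial : ℝ) / x ^ k := by
  have h1 : x ^ k / (k.factorial : ℝ) ≤ Real.exp x := by
    calc x ^ k / (k.factorial : ℝ) ≤ ∑ i ∈ Finset.range (k + 1), x ^ i / i.factorial := by
          exact Finset.single_le_sum (f := fun i => x ^ i / (i.factorial : ℝ))
            (fun i _ => by positivity) (Finset.self_mem_range_succ k)
      _ ≤ Real.exp x := Real.sum_le_exp_of_nonneg hx.le _
  have hxk : 0 < x ^ k := pow_pos hx k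
  have hkf : (0:ℝ) < k.factorial := by positivity
  rw [Real.exp_neg, inv_le_iff_one_le_mul₀ (Real.exp_pos x)]
  rw [div_le_iff₀ hkf] at h1
  calc (1:ℝ) = x ^ k / x ^ k := (div_self hxk.ne').symm
    _ ≤ Real.exp x * (k.factorial : ℝ) / x ^ k := by
        gcongr
    _ = (k.factorial : ℝ) / x ^ k * Real.exp x := by ring

lemma aux_geom (r : ℝ) (h0 : 0 ≤ r) (h1 : r < 1) (n : ℕ) :
    ∑ i ∈ Finset.range n, r ^ i ≤ 1 / (1 - r) := by
  have hr : r ≠ 1 := ne_of_lt h1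
  have h1r : 0 < 1 - r := by linarith
  have : (∑ i ∈ Finset.range n, r ^ i) = (1 - r ^ n) / (1 - r) := by
    rw [geom_sum_eq hr]
    rw [div_eq_div_iff (by intro h; apply hr; linarith [sub_eq_zero.mp h] ) h1r.ne']
    ring
  rw [this]
  gcongr
  nlinarith [pow_nonneg h0 n]

set_option maxHeartbeats 4000000 in
/-- With `β_t = c t^{−α}` for `0 ≤ α < 1/2` and fixed
`γ, κ, d, c > 0`, the weighted sum
`∑_{t=1}^{T−1} β_t exp(−(κd²/2) ∑_{s=t+1}^{T−1} γ β_s²)`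
is `O(T^α log T)` as `T → ∞`. -/
theorem stmt17 (γ κ dd c : ℝ) (hγ : 0 < γ) (hκ : 0 < κ) (hd : 0 < dd) (hc : 0 < c)
    (α : ℝ) (hα0 : 0 ≤ α) (hα2 : α < 1 / 2)
    (β : ℕ → ℝ) (hβ : ∀ t : ℕ, 1 ≤ t → β t = c * (t : ℝ) ^ (-α)) :
    ∃ C > (0 : ℝ), ∃ N : ℕ, ∀ T ≥ N,
      ∑ t ∈ Finset.Icc 1 (T - 1),
          β t * Real.exp (-(κ * dd ^ 2 / 2)
            * ∑ s ∈ Finset.Icc (t + 1) (T - 1), γ * β s ^ 2)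
        ≤ C * (T : ℝ) ^ α * Real.log T := by
  set K : ℝ := κ * dd ^ 2 / 2 with hK
  have hK0 : 0 < K := by positivity
  set A : ℝ := K * (γ * c ^ 2) with hA
  have hA0 : 0 < A := by positivity
  set k : ℕ := ⌈(1 - 2 * α)⁻¹⌉₊ with hk
  have h12α : 0 < 1 - 2 * α := by linarith
  have hk1 : 1 ≤ (1 - 2 * α) * k := by
    have := Nat.le_ceil (1 - 2 * α)⁻¹
    rw [← hk] at this
    calc (1:ℝ) = (1 - 2*α) * (1 - 2*α)⁻¹ := (mul_inv_cancel₀ h12α.ne').symm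
      _ ≤ (1 - 2*α) * k := by gcongr
  set CA : ℝ := c * (k.factorial : ℝ) * (4 / A) ^ k with hCA
  set CB : ℝ := 2 * c * (1 + A) / A with hCB
  have hCA0 : 0 < CA := by positivity
  have hCB0 : 0 < CB := by positivity
  refine ⟨CA + CB, by positivity, 8, fun T hT => ?_⟩
  have hT8 : (8:ℝ) ≤ (T:ℝ) := by exact_mod_cast hT
  have hT0 : (0:ℝ) < T := by linarith
  have hT1 : (1:ℝ) ≤ T := by linarith
  set lam : ℝ := A * (T : ℝ) ^ (-(2 * α)) with hlam
  have hlam0 : 0 < lam := by positivity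
  set r : ℝ := Real.exp (-lam) with hr
  have hr0 : 0 < r := Real.exp_pos _
  have hr1 : r < 1 := by
    rw [hr, Real.exp_lt_one_iff]; linarith
  set M : ℕ := T / 2 with hM
  -- per-term bound
  have key : ∀ t ∈ Finset.Icc 1 (T - 1),
      β t * Real.exp (-(κ * dd ^ 2 / 2)
        * ∑ s ∈ Finset.Icc (t + 1) (T - 1), γ * β s ^ 2)
      ≤ c * (t : ℝ) ^ (-α) * r ^ (T - 1 - t) := by
    intro t ht
    rw [Finset.mem_Icc] at ht
    obtain ⟨ht1, ht2⟩ := ht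
    rw [hβ t ht1]
    have hβt : 0 ≤ c * (t:ℝ)^(-α) := by positivity
    apply mul_le_mul_of_nonneg_left ?_ hβt
    set n := T - 1 - t with hn
    have hcard : (Finset.Icc (t+1) (T-1)).card = n := by
      rw [Nat.card_Icc]; omega
    have hlow : ∀ s ∈ Finset.Icc (t+1) (T-1),
        γ * c^2 * (T:ℝ)^(-(2*α)) ≤ γ * β s ^ 2 := by
      intro s hs
      rw [Finset.mem_Icc] at hs
      have hs1 : 1 ≤ s := by omega
      have hs0 : (0:ℝ) < s := by exact_mod_cast Nat.pos_of_ne_zero (by omega)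
      rw [hβ s hs1]
      have hsq : (c * (s:ℝ)^(-α))^2 = c^2 * (s:ℝ)^(-(2*α)) := by
        have h2 : ((s:ℝ)^(-α))^2 = (s:ℝ)^(-(2*α)) := by
          rw [sq, ← Real.rpow_add hs0]; ring_nf
        rw [mul_pow, h2]
      rw [hsq]
      have hmono : (T:ℝ)^(-(2*α)) ≤ (s:ℝ)^(-(2*α)) :=
        Real.rpow_le_rpow_of_nonpos hs0 (by exact_mod_cast (by omega : s ≤ T)) (by linarith)
      calc γ*c^2*(T:ℝ)^(-(2*α)) ≤ γ*c^2*(s:ℝ)^(-(2*α)) := by gcongr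
        _ = γ*(c^2*(s:ℝ)^(-(2*α))) := by ring
    have hS : (n:ℝ) * (γ * c^2 * (T:ℝ)^(-(2*α)))
        ≤ ∑ s ∈ Finset.Icc (t+1) (T-1), γ * β s ^ 2 := by
      have h := Finset.card_nsmul_le_sum (Finset.Icc (t+1) (T-1)) _ _ hlow
      rwa [hcard, nsmul_eq_mul] at h
    rw [hr, ← Real.exp_nat_mul]
    apply Real.exp_le_exp.mpr
    have e : (n:ℝ) * -lam = -(K * ((n:ℝ)*(γ*c^2*(T:ℝ)^(-(2*α))))) := by
      rw [hlam, hA]; ring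
    rw [e]
    have h2 := mul_le_mul_of_nonneg_left hS hK0.le
    rw [hK] at h2 ⊢
    linarith [h2]
  -- split the sum
  have hsplit : ∑ t ∈ Finset.Icc 1 (T - 1),
      β t * Real.exp (-(κ * dd ^ 2 / 2)
        * ∑ s ∈ Finset.Icc (t + 1) (T - 1), γ * β s ^ 2)
      = (∑ t ∈ Finset.Icc 1 M, β t * Real.exp (-(κ * dd ^ 2 / 2)
          * ∑ s ∈ Finset.Icc (t + 1) (T - 1), γ * β s ^ 2))
        + ∑ t ∈ Finset.Icc (M + 1) (T - 1), β t * Real.exp (-(κ * dd ^ 2 / 2)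
          * ∑ s ∈ Finset.Icc (t + 1) (T - 1), γ * β s ^ 2) := by
    have h2 : M ≤ T - 1 := by omega
    have e1 : Finset.Icc 1 (T-1) = Finset.Ioc 0 (T-1) := (Finset.Icc_add_one_left_eq_Ioc 0 _)
    have e2 : Finset.Icc 1 M = Finset.Ioc 0 M := (Finset.Icc_add_one_left_eq_Ioc 0 _)
    have e3 : Finset.Icc (M+1) (T-1) = Finset.Ioc M (T-1) := (Finset.Icc_add_one_left_eq_Ioc M _)
    rw [e1, e2, e3]
    exact (Finset.sum_Ioc_consecutive _ (Nat.zero_le M) h2).symm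
  rw [hsplit]
  -- Part A
  set nA : ℕ := T - 1 - M with hnA
  have hnA4 : (T:ℝ) / 4 ≤ (nA:ℝ) := by
    have h4 : T ≤ 4 * nA := by omega
    have h4' : (T:ℝ) ≤ 4 * (nA:ℝ) := by exact_mod_cast h4
    linarith
  have hMcard : (Finset.Icc 1 M).card = M := by rw [Nat.card_Icc]; omega
  have bndA : ∀ t ∈ Finset.Icc 1 M,
      β t * Real.exp (-(κ * dd ^ 2 / 2)
        * ∑ s ∈ Finset.Icc (t + 1) (T - 1), γ * β s ^ 2) ≤ c * r ^ nA := by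
    intro t ht
    rw [Finset.mem_Icc] at ht
    have htT : t ∈ Finset.Icc 1 (T-1) := by rw [Finset.mem_Icc]; omega
    refine (key t htT).trans ?_
    have h1 : (t:ℝ)^(-α) ≤ 1 :=
      Real.rpow_le_one_of_one_le_of_nonpos (by exact_mod_cast ht.1) (by linarith)
    have h2 : r ^ (T-1-t) ≤ r ^ nA :=
      pow_le_pow_of_le_one hr0.le hr1.le (by omega)
    calc c * (t:ℝ)^(-α) * r^(T-1-t) ≤ (c * 1) * r^nA := by
          apply mul_le_mul ?_ h2 (by positivity) (by positivity)
          exact mul_le_mul_of_nonneg_left h1 hc.le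
      _ = c * r^nA := by ring
  have partA0 : (∑ t ∈ Finset.Icc 1 M, β t * Real.exp (-(κ * dd ^ 2 / 2)
        * ∑ s ∈ Finset.Icc (t + 1) (T - 1), γ * β s ^ 2)) ≤ (M:ℝ) * (c * r ^ nA) := by
    have h := Finset.sum_le_card_nsmul _ _ _ bndA
    rwa [hMcard, nsmul_eq_mul] at h
  set x : ℝ := (A/4) * (T:ℝ)^(1 - 2*α) with hx
  have hx0 : 0 < x := by positivity
  have hrExp : r ^ nA = Real.exp ((nA:ℝ) * -lam) := by rw [hr, Real.exp_nat_mul]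
  have hTsplit : (T:ℝ)^(1-2*α) = (T:ℝ) * (T:ℝ)^(-(2*α)) := by
    nth_rewrite 2 [← Real.rpow_one (T:ℝ)]
    rw [← Real.rpow_add hT0]
    ring_nf
  have hle : (nA:ℝ) * -lam ≤ -x := by
    have hxe : x = ((T:ℝ)/4) * lam := by rw [hx, hlam, hTsplit]; ring
    rw [hxe]
    linarith [mul_le_mul_of_nonneg_right hnA4 hlam0.le]
  have hx2 : Real.exp (-x) ≤ (k.factorial : ℝ) / x^k := aux_exp_le x hx0 k
  have hxk : (A/4)^k * (T:ℝ) ≤ x^k := by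
    rw [hx, mul_pow]
    have hTk : ((T:ℝ)^(1-2*α))^k = (T:ℝ)^((1-2*α)*(k:ℝ)) := by
      rw [← Real.rpow_natCast ((T:ℝ)^(1-2*α)) k, ← Real.rpow_mul hT0.le]
    have hTk2 : (T:ℝ) ≤ ((T:ℝ)^(1-2*α))^k := by
      rw [hTk]
      calc (T:ℝ) = (T:ℝ)^(1:ℝ) := (Real.rpow_one _).symm
        _ ≤ (T:ℝ)^((1-2*α)*(k:ℝ)) := Real.rpow_le_rpow_of_exponent_le hT1 hk1
    have h0 : (0:ℝ) ≤ (A/4)^k := by positivity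
    exact mul_le_mul_of_nonneg_left hTk2 h0
  have h44 : ((4:ℝ)/A)^k * (A/4)^k = 1 := by
    rw [← mul_pow]
    rw [show (4:ℝ)/A * (A/4) = 1 by field_simp]
    exact one_pow k
  have finalA : (M:ℝ) * (c * r^nA) ≤ CA := by
    have hM_T : (M:ℝ) ≤ (T:ℝ) := by exact_mod_cast Nat.div_le_self T 2
    have step : (M:ℝ)*(c*r^nA) ≤ (T:ℝ)*(c*((k.factorial:ℝ)/x^k)) := by
      apply mul_le_mul hM_T ?_ (by positivity) hT0.le
      apply mul_le_mul_of_nonneg_left ?_ hc.le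
      rw [hrExp]
      exact (Real.exp_le_exp.mpr hle).trans hx2
    refine step.trans ?_
    have e : (T:ℝ)*(c*((k.factorial:ℝ)/x^k)) = (T:ℝ)*c*(k.factorial:ℝ)/x^k := by ring
    rw [e, div_le_iff₀ (pow_pos hx0 k)]
    have e2 : (T:ℝ)*c*(k.factorial:ℝ)
        = (c*(k.factorial:ℝ)*((4:ℝ)/A)^k)*((A/4)^k*(T:ℝ)) := by
      calc (T:ℝ)*c*(k.factorial:ℝ)
          = c*(k.factorial:ℝ)*(T:ℝ)*(((4:ℝ)/A)^k*((A/4))^k) := by rw [h44]; ring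
        _ = (c*(k.factorial:ℝ)*((4:ℝ)/A)^k)*((A/4)^k*(T:ℝ)) := by ring
    rw [e2, hCA]
    exact mul_le_mul_of_nonneg_left hxk (by positivity)
  -- Part B
  have bndB : ∀ t ∈ Finset.Icc (M+1) (T-1),
      β t * Real.exp (-(κ * dd ^ 2 / 2)
        * ∑ s ∈ Finset.Icc (t + 1) (T - 1), γ * β s ^ 2)
      ≤ (2*c*(T:ℝ)^(-α)) * r^(T-1-t) := by
    intro t ht
    rw [Finset.mem_Icc] at ht
    have htT : t ∈ Finset.Icc 1 (T-1) := by rw [Finset.mem_Icc]; omega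
    refine (key t htT).trans ?_
    have hthalf : (T:ℝ)/2 ≤ (t:ℝ) := by
      have h2t : T ≤ 2*t := by omega
      have h2t' : (T:ℝ) ≤ 2*(t:ℝ) := by exact_mod_cast h2t
      linarith
    have h1 : (t:ℝ)^(-α) ≤ 2*(T:ℝ)^(-α) := by
      have hB1 : (t:ℝ)^(-α) ≤ ((T:ℝ)/2)^(-α) :=
        Real.rpow_le_rpow_of_nonpos (by positivity) hthalf (by linarith)
      have hB2 : ((T:ℝ)/2)^(-α) = (T:ℝ)^(-α) * 2^α := by
        rw [Real.div_rpow hT0.le (by norm_num : (0:ℝ) ≤ 2),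
          Real.rpow_neg (by norm_num : (0:ℝ) ≤ 2)]
        field_simp
      have hB3 : (2:ℝ)^α ≤ 2 := by
        calc (2:ℝ)^α ≤ (2:ℝ)^(1:ℝ) :=
              Real.rpow_le_rpow_of_exponent_le one_le_two (by linarith)
          _ = 2 := Real.rpow_one 2
      have hTα : (0:ℝ) ≤ (T:ℝ)^(-α) := by positivity
      calc (t:ℝ)^(-α) ≤ (T:ℝ)^(-α) * 2^α := hB2 ▸ hB1
        _ ≤ (T:ℝ)^(-α) * 2 := by exact mul_le_mul_of_nonneg_left hB3 hTα
        _ = 2*(T:ℝ)^(-α) := by ring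
    calc c * (t:ℝ)^(-α) * r^(T-1-t) ≤ c * (2*(T:ℝ)^(-α)) * r^(T-1-t) := by
          apply mul_le_mul_of_nonneg_right ?_ (by positivity)
          exact mul_le_mul_of_nonneg_left h1 hc.le
      _ = (2*c*(T:ℝ)^(-α)) * r^(T-1-t) := by ring
  have hgeo : ∑ t ∈ Finset.Icc (M+1) (T-1), r^(T-1-t) ≤ 1/(1-r) := by
    have hinj : ∀ a ∈ Finset.Icc (M+1) (T-1), ∀ b ∈ Finset.Icc (M+1) (T-1),
        T-1-a = T-1-b → a = b := by
      intro a ha b hb hab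
      rw [Finset.mem_Icc] at ha hb
      omega
    have himg : ∑ t ∈ Finset.Icc (M+1) (T-1), r^(T-1-t)
        = ∑ j ∈ (Finset.Icc (M+1) (T-1)).image (fun t => T-1-t), r^j :=
      (Finset.sum_image hinj).symm
    rw [himg]
    have hsub : (Finset.Icc (M+1) (T-1)).image (fun t => T-1-t) ⊆ Finset.range T := by
      intro j hj
      simp only [Finset.mem_image, Finset.mem_Icc] at hj
      obtain ⟨t, ht, rfl⟩ := hj
      rw [Finset.mem_range]
      omega
    calc ∑ j ∈ (Finset.Icc (M+1) (T-1)).image (fun t => T-1-t), r^j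
        ≤ ∑ j ∈ Finset.range T, r^j :=
          Finset.sum_le_sum_of_subset_of_nonneg hsub
            (fun j _ _ => pow_nonneg hr0.le j)
      _ ≤ 1/(1-r) := aux_geom r hr0.le hr1 T
  have hrle : 1/(1-r) ≤ (1+A)/lam := by
    have h1 : r ≤ (1+lam)⁻¹ := by
      rw [hr, Real.exp_neg]
      apply inv_anti₀ (by positivity)
      linarith [Real.add_one_le_exp lam]
    have h2 : lam/(1+lam) ≤ 1 - r := by
      have he : 1 - (1+lam)⁻¹ = lam/(1+lam) := by field_simp; ring
      linarith
    have h3 : 0 < lam/(1+lam) := by positivity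
    have hlamA : lam ≤ A := by
      have hle1 : (T:ℝ)^(-(2*α)) ≤ 1 :=
        Real.rpow_le_one_of_one_le_of_nonpos hT1 (by linarith)
      rw [hlam]
      calc A * (T:ℝ)^(-(2*α)) ≤ A * 1 := mul_le_mul_of_nonneg_left hle1 hA0.le
        _ = A := mul_one A
    calc 1/(1-r) ≤ 1/(lam/(1+lam)) := one_div_le_one_div_of_le h3 h2
      _ = (1+lam)/lam := one_div_div _ _
      _ ≤ (1+A)/lam := by gcongr
  have key2 : (T:ℝ)^(-α) * (T:ℝ)^(2*α) = (T:ℝ)^α := by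
    rw [← Real.rpow_add hT0]; ring_nf
  have partB : (∑ t ∈ Finset.Icc (M+1) (T-1), β t * Real.exp (-(κ * dd ^ 2 / 2)
        * ∑ s ∈ Finset.Icc (t + 1) (T - 1), γ * β s ^ 2)) ≤ CB * (T:ℝ)^α := by
    calc (∑ t ∈ Finset.Icc (M+1) (T-1), β t * Real.exp (-(κ * dd ^ 2 / 2)
          * ∑ s ∈ Finset.Icc (t + 1) (T - 1), γ * β s ^ 2))
        ≤ ∑ t ∈ Finset.Icc (M+1) (T-1), (2*c*(T:ℝ)^(-α)) * r^(T-1-t) :=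
          Finset.sum_le_sum bndB
      _ = (2*c*(T:ℝ)^(-α)) * ∑ t ∈ Finset.Icc (M+1) (T-1), r^(T-1-t) := by
          rw [Finset.mul_sum]
      _ ≤ (2*c*(T:ℝ)^(-α)) * ((1+A)/lam) := by
          apply mul_le_mul_of_nonneg_left (hgeo.trans hrle) (by positivity)
      _ = CB * (T:ℝ)^α := by
          rw [hCB, hlam, Real.rpow_neg hT0.le (2*α), ← key2]
          have hT2α : (0:ℝ) < (T:ℝ)^(2*α) := by positivity
          field_simp
  -- conclusion
  have hTa : (1:ℝ) ≤ (T:ℝ)^α := by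
    calc (1:ℝ) = (1:ℝ)^α := (Real.one_rpow α).symm
      _ ≤ (T:ℝ)^α := Real.rpow_le_rpow zero_le_one hT1 hα0
  have hlog : 1 ≤ Real.log T := by
    rw [Real.le_log_iff_exp_le hT0]
    calc Real.exp 1 ≤ 2.7182818286 := Real.exp_one_lt_d9.le
      _ ≤ 8 := by norm_num
      _ ≤ (T:ℝ) := hT8
  have h1 : (1:ℝ) ≤ (T:ℝ)^α * Real.log T := by
    calc (1:ℝ) = 1 * 1 := by ring
      _ ≤ (T:ℝ)^α * Real.log T :=
          mul_le_mul hTa hlog zero_le_one (zero_le_one.trans hTa)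
  have e1 : CA ≤ CA * ((T:ℝ)^α * Real.log T) := le_mul_of_one_le_right hCA0.le h1
  have e2 : CB * (T:ℝ)^α ≤ CB * (T:ℝ)^α * Real.log T :=
    le_mul_of_one_le_right (by positivity) hlog
  calc _ ≤ (M:ℝ) * (c * r^nA) + CB * (T:ℝ)^α := add_le_add partA0 partB
    _ ≤ CA + CB * (T:ℝ)^α := by linarith [finalA]
    _ ≤ CA * ((T:ℝ)^α * Real.log T) + CB * (T:ℝ)^α * Real.log T := add_le_add e1 e2
    _ = (CA + CB) * (T:ℝ)^α * Real.log T := by ring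
end
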